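/- arXiv:1403.1903 — 4 statements merged into one kernel-verified Lean document; each statement's English description precedes it below -/
import Mathlib

section
/- If g : ℝ_+^k → ℝ is homogeneous of degree α with -(k+1)/2 < α < -k/2 and satisfies |g(x)| ≤ C‖x‖^α where ‖x‖ = ∑|x_j|, then ∫_{ℝ_+^k} |g(x) g(1+x)| dx < ∞, where 1 = (1,…,1). -/
open MeasureTheory Set

lemma aux_int {β : ℝ} (hβ1 : -1 < β) (hβ2 : β < -1/2) :
    IntegrableOn (fun x : ℝ => x ^ β * (1 + x) ^ β) (Set.Ioi 0) := by
  have hβ0 : β ≤ 0 := by linarith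
  have hmeas : Measurable (fun x : ℝ => x ^ β * (1 + x) ^ β) :=
    (measurable_id.pow_const _).mul ((measurable_const.add measurable_id).pow_const _)
  have h1 : IntegrableOn (fun x : ℝ => x ^ β * (1 + x) ^ β) (Set.Ioc 0 1) := by
    have hi : IntegrableOn (fun x : ℝ => x ^ β) (Set.Ioc 0 1) := by
      have := intervalIntegral.intervalIntegrable_rpow' (a := 0) (b := 1) hβ1
      rwa [intervalIntegrable_iff_integrableOn_Ioc_of_le zero_le_one] at this
    refine hi.mono' hmeas.aestronglyMeasurable ?_
    filter_upwards [ae_restrict_mem measurableSet_Ioc] with x hx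
    have hx0 : 0 < x := hx.1
    rw [Real.norm_eq_abs, abs_of_nonneg (by positivity)]
    calc x ^ β * (1 + x) ^ β ≤ x ^ β * 1 :=
          mul_le_mul_of_nonneg_left
            (Real.rpow_le_one_of_one_le_of_nonpos (by linarith) hβ0)
            (Real.rpow_nonneg hx0.le β)
      _ = x ^ β := mul_one _
  have h2 : IntegrableOn (fun x : ℝ => x ^ β * (1 + x) ^ β) (Set.Ioi 1) := by
    have hi : IntegrableOn (fun x : ℝ => x ^ (2 * β)) (Set.Ioi 1) :=
      (integrableOn_Ioi_rpow_iff zero_lt_one).2 (by linarith)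
    refine hi.mono' hmeas.aestronglyMeasurable ?_
    filter_upwards [ae_restrict_mem measurableSet_Ioi] with x hx
    have hx0 : (0:ℝ) < x := lt_trans zero_lt_one hx
    rw [Real.norm_eq_abs, abs_of_nonneg (by positivity)]
    calc x ^ β * (1 + x) ^ β ≤ x ^ β * x ^ β :=
          mul_le_mul_of_nonneg_left
            (Real.rpow_le_rpow_of_nonpos hx0 (by linarith) hβ0)
            (Real.rpow_nonneg hx0.le β)
      _ = x ^ (2 * β) := by rw [← Real.rpow_add hx0]; ring_nf
  have : Set.Ioi (0:ℝ) = Set.Ioc 0 1 ∪ Set.Ioi 1 := (Set.Ioc_union_Ioi_eq_Ioi zero_le_one).symm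
  rw [this]
  exact h1.union h2

lemma aux_amgm {k : ℕ} (hk : 1 ≤ k) {α : ℝ} (hα : α ≤ 0) (y : Fin k → ℝ)
    (hy : ∀ j, 0 < y j) : (∑ j, y j) ^ α ≤ ∏ j, (y j) ^ (α / k) := by
  have hk0 : (0:ℝ) < k := by exact_mod_cast hk
  have hs : 0 < ∑ j, y j := Finset.sum_pos (fun j _ => hy j) ⟨⟨0, hk⟩, Finset.mem_univ _⟩
  have hβ : α / k ≤ 0 := div_nonpos_of_nonpos_of_nonneg hα hk0.le
  have h1 : ∀ j : Fin k, (∑ i, y i) ^ (α / k) ≤ (y j) ^ (α / k) := fun j =>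
    Real.rpow_le_rpow_of_nonpos (hy j)
      (Finset.single_le_sum (fun i _ => (hy i).le) (Finset.mem_univ j)) hβ
  calc (∑ j, y j) ^ α = ∏ _j : Fin k, (∑ i, y i) ^ (α / k) := by
        rw [Finset.prod_const, Finset.card_univ, Fintype.card_fin,
          ← Real.rpow_natCast ((∑ i, y i) ^ (α / k)) k, ← Real.rpow_mul hs.le,
          div_mul_cancel₀ _ hk0.ne']
    _ ≤ ∏ j, (y j) ^ (α / k) :=
        Finset.prod_le_prod (fun j _ => Real.rpow_nonneg hs.le _) (fun j _ => h1 j)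

/-- If `g : ℝ₊^k → ℝ` is homogeneous of degree `α` with `-(k+1)/2 < α < -k/2`
and `|g x| ≤ C‖x‖^α` with `‖x‖ = ∑ |x_j|`, then
`∫_{ℝ₊^k} |g(x) g(1+x)| dx < ∞`. -/
theorem stmt_3 (k : ℕ) (hk : 1 ≤ k) (α C : ℝ) (hC : 0 < C)
    (hα₁ : -((k : ℝ) + 1) / 2 < α) (hα₂ : α < -(k : ℝ) / 2)
    (g : (Fin k → ℝ) → ℝ) (hg : Measurable g)
    (hhom : ∀ lam : ℝ, 0 < lam → ∀ x : Fin k → ℝ, (∀ j, 0 < x j) →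
      g (fun j => lam * x j) = lam ^ α * g x)
    (hbound : ∀ x : Fin k → ℝ, (∀ j, 0 < x j) →
      |g x| ≤ C * (∑ j, |x j|) ^ α) :
    IntegrableOn (fun x : Fin k → ℝ => |g x * g (fun j => 1 + x j)|)
      {x : Fin k → ℝ | ∀ j, 0 < x j} := by
  have hk0 : (0:ℝ) < k := by exact_mod_cast hk
  have hk1 : (1:ℝ) ≤ k := by exact_mod_cast hk
  set β : ℝ := α / k with hβdef
  have hα0 : α ≤ 0 := by nlinarith
  have hβ1 : -1 < β := by rw [hβdef, lt_div_iff₀ hk0]; nlinarith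
  have hβ2 : β < -1/2 := by rw [hβdef, div_lt_iff₀ hk0]; nlinarith
  -- the dominating one-dimensional function
  set f : ℝ → ℝ := fun x => x ^ β * (1 + x) ^ β with hfdef
  set F : ℝ → ℝ := (Set.Ioi (0:ℝ)).indicator f with hFdef
  have hFint : Integrable F := by
    rw [hFdef, integrable_indicator_iff measurableSet_Ioi]
    exact aux_int hβ1 hβ2
  have hGint : Integrable (fun x : Fin k → ℝ => ∏ j, F (x j)) :=
    Integrable.fintype_prod (fun _ => hFint)
  have hS : MeasurableSet {x : Fin k → ℝ | ∀ j, 0 < x j} := by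
    have : {x : Fin k → ℝ | ∀ j, 0 < x j} = Set.pi Set.univ (fun _ => Set.Ioi 0) := by
      ext x; simp [Set.mem_pi]
    rw [this]
    exact MeasurableSet.univ_pi (fun _ => measurableSet_Ioi)
  have h1meas : Measurable (fun x : Fin k → ℝ => (fun j => 1 + x j)) :=
    measurable_pi_lambda _ (fun j => (measurable_pi_apply j).const_add 1)
  refine Integrable.mono' ((hGint.const_mul (C^2)).integrableOn)
    ((hg.mul (hg.comp h1meas)).abs.aestronglyMeasurable) ?_
  filter_upwards [ae_restrict_mem hS] with x hx
  have hx1 : ∀ j, 0 < 1 + x j := fun j => by have := hx j; linarith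
  have e1 : |g x| ≤ C * ∏ j, (x j) ^ β := by
    refine (hbound x hx).trans ?_
    have : ∀ j, |x j| = x j := fun j => abs_of_pos (hx j)
    simp_rw [this]
    exact mul_le_mul_of_nonneg_left (aux_amgm hk hα0 x hx) hC.le
  have e2 : |g (fun j => 1 + x j)| ≤ C * ∏ j, (1 + x j) ^ β := by
    refine (hbound _ hx1).trans ?_
    have : ∀ j, |1 + x j| = 1 + x j := fun j => abs_of_pos (hx1 j)
    simp_rw [this]
    exact mul_le_mul_of_nonneg_left (aux_amgm hk hα0 _ hx1) hC.le
  have hFx : ∀ j, F (x j) = f (x j) := fun j => Set.indicator_of_mem (hx j) f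
  rw [Real.norm_eq_abs, abs_abs, abs_mul]
  calc |g x| * |g (fun j => 1 + x j)|
      ≤ (C * ∏ j, (x j) ^ β) * (C * ∏ j, (1 + x j) ^ β) :=
        mul_le_mul e1 e2 (abs_nonneg _)
          (mul_nonneg hC.le (Finset.prod_nonneg fun j _ => Real.rpow_nonneg (hx j).le _))
    _ = C^2 * ∏ j, ((x j) ^ β * (1 + x j) ^ β) := by
        rw [Finset.prod_mul_distrib]; ring
    _ = C^2 * ∏ j, F (x j) := by simp_rw [hFx]; rfl
end

section
/- Let g : ℝ_+^k → ℝ be homogeneous of degree α with -(k+1)/2 < α < -k/2 and |g(x)| ≤ C‖x‖^α. For an integer r with 0 ≤ 2r < k, the function g_r(x) := ∫_{ℝ_+^r} g(y_1,y_1,…,y_r,y_r,x_1,…,x_{k-2r}) dy is well-defined (the integral converges absolutely for all x ∈ ℝ_+^{k-2r}) and is homogeneous of degree α + r, with -(k-2r+1)/2 < α+r < -(k-2r)/2. -/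
open MeasureTheory

/-- Pairing `r` pairs of coordinates of a homogeneous kernel `g` of degree
`α ∈ (-(k+1)/2, -k/2)` (where `k = 2r + m`, `m > 0`) and integrating them out
gives a well-defined function `g_r` which is homogeneous of degree `α + r`,
with `-(m+1)/2 < α + r < -m/2`. -/
theorem stmt_5 (r m : ℕ) (hm : 0 < m) (α C : ℝ) (hC : 0 < C)
    (hα₁ : -((2 * r + m : ℕ) + 1 : ℝ) / 2 < α)
    (hα₂ : α < -((2 * r + m : ℕ) : ℝ) / 2)
    (g : ((Fin r ⊕ Fin r ⊕ Fin m) → ℝ) → ℝ) (hg : Measurable g)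
    (hhom : ∀ lam : ℝ, 0 < lam → ∀ z : (Fin r ⊕ Fin r ⊕ Fin m) → ℝ,
      (∀ i, 0 < z i) → g (fun i => lam * z i) = lam ^ α * g z)
    (hbound : ∀ z : (Fin r ⊕ Fin r ⊕ Fin m) → ℝ, (∀ i, 0 < z i) →
      |g z| ≤ C * (∑ i, z i) ^ α) :
    (∀ x : Fin m → ℝ, (∀ j, 0 < x j) →
      IntegrableOn (fun y : Fin r → ℝ => g (Sum.elim y (Sum.elim y x)))
        {y : Fin r → ℝ | ∀ i, 0 < y i}) ∧
    (∀ lam : ℝ, 0 < lam → ∀ x : Fin m → ℝ, (∀ j, 0 < x j) →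
      (∫ y in {y : Fin r → ℝ | ∀ i, 0 < y i},
          g (Sum.elim y (Sum.elim y (fun j => lam * x j)))) =
        lam ^ (α + r) *
          ∫ y in {y : Fin r → ℝ | ∀ i, 0 < y i}, g (Sum.elim y (Sum.elim y x))) ∧
    (-((m : ℝ) + 1) / 2 < α + r ∧ α + r < -(m : ℝ) / 2) := by
  have hα₁' : -((2 * (r:ℝ) + m) + 1) / 2 < α := by push_cast at hα₁; linarith
  have hα₂' : α < -(2 * (r:ℝ) + m) / 2 := by push_cast at hα₂; linarith
  have hm' : (0:ℝ) < m := by exact_mod_cast hm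
  have hαneg : α ≤ 0 := by nlinarith [Nat.cast_nonneg (α := ℝ) r]
  have hrα : (r : ℝ) < -α := by nlinarith
  set S : Set (Fin r → ℝ) := {y : Fin r → ℝ | ∀ i, 0 < y i} with hSdef
  have hS : MeasurableSet S := by
    have : S = ⋂ i, (fun y : Fin r → ℝ => y i) ⁻¹' Set.Ioi 0 := by
      ext y; simp [hSdef, Set.mem_iInter]
    rw [this]
    exact MeasurableSet.iInter fun i => (measurable_pi_apply i) measurableSet_Ioi
  have hmapmeas : ∀ x : Fin m → ℝ,
      Measurable (fun y : Fin r → ℝ => g (Sum.elim y (Sum.elim y x))) := by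
    intro x
    apply hg.comp
    apply measurable_pi_lambda
    rintro (j | j | j)
    · exact measurable_pi_apply j
    · exact measurable_pi_apply j
    · exact measurable_const
  have hfinrank : Module.finrank ℝ (Fin r → ℝ) = r := Module.finrank_fin_fun ℝ
  -- key pointwise bound on S
  have hptbound : ∀ (x : Fin m → ℝ), (∀ j, 0 < x j) → ∀ y ∈ S,
      |g (Sum.elim y (Sum.elim y x))| ≤
        (C * min (∑ j, x j) 1 ^ α) * (1 + ‖y‖) ^ α := by
    intro x hx y hy
    set s := ∑ j, x j with hs
    have hspos : 0 < s := Finset.sum_pos (fun j _ => hx j) ⟨⟨0, hm⟩, Finset.mem_univ _⟩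
    have hypos : ∀ i, 0 < y i := hy
    have htnn : 0 ≤ ∑ i, y i := Finset.sum_nonneg fun i _ => (hypos i).le
    have hznn : ∀ i, 0 < Sum.elim y (Sum.elim y x) i := by rintro (j|j|j) <;> simp [hypos, hx]
    have h1 := hbound _ hznn
    have hsum : ∑ i, Sum.elim y (Sum.elim y x) i = (∑ i, y i) + ((∑ i, y i) + s) := by
      rw [Fintype.sum_sum_type, Fintype.sum_sum_type]; simp [hs]
    have hnorm : ‖y‖ ≤ ∑ i, y i := by
      refine pi_norm_le_iff_of_nonneg htnn |>.2 fun i => ?_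
      rw [Real.norm_eq_abs, abs_of_pos (hypos i)]
      exact Finset.single_le_sum (fun j _ => (hypos j).le) (Finset.mem_univ i)
    have hmin : 0 < min s 1 := lt_min hspos one_pos
    have hprod : min s 1 * (1 + ‖y‖) ≤ ∑ i, Sum.elim y (Sum.elim y x) i := by
      rw [hsum]
      have h2 : min s 1 * (1 + ‖y‖) = min s 1 + min s 1 * ‖y‖ := by ring
      have h3 : min s 1 * ‖y‖ ≤ 1 * ‖y‖ :=
        mul_le_mul_of_nonneg_right (min_le_right _ _) (norm_nonneg _)
      have h4 : min s 1 ≤ s := min_le_left _ _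
      rw [h2]; rw [one_mul] at h3
      nlinarith [norm_nonneg y]
    have h5 : (∑ i, Sum.elim y (Sum.elim y x) i) ^ α ≤ (min s 1 * (1 + ‖y‖)) ^ α :=
      Real.rpow_le_rpow_of_nonpos (by positivity) hprod hαneg
    have h6 : (min s 1 * (1 + ‖y‖)) ^ α = min s 1 ^ α * (1 + ‖y‖) ^ α :=
      Real.mul_rpow hmin.le (by positivity)
    calc |g (Sum.elim y (Sum.elim y x))| ≤ C * (∑ i, Sum.elim y (Sum.elim y x) i) ^ α := h1
      _ ≤ C * (min s 1 ^ α * (1 + ‖y‖) ^ α) := by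
          rw [← h6]; exact mul_le_mul_of_nonneg_left h5 hC.le
      _ = (C * min s 1 ^ α) * (1 + ‖y‖) ^ α := by ring
  have hdom : Integrable (fun y : Fin r → ℝ => (1 + ‖y‖) ^ α) := by
    have := integrable_one_add_norm (E := Fin r → ℝ) (μ := volume) (r := -α)
      (by rw [hfinrank]; exact hrα)
    simpa using this
  have hintOn : ∀ x : Fin m → ℝ, (∀ j, 0 < x j) →
      IntegrableOn (fun y : Fin r → ℝ => g (Sum.elim y (Sum.elim y x))) S := by
    intro x hx
    refine Integrable.mono' (((hdom.const_mul (C * min (∑ j, x j) 1 ^ α))).restrict)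
      ((hmapmeas x).aestronglyMeasurable.restrict) ?_
    rw [ae_restrict_iff' hS]
    exact Filter.Eventually.of_forall fun y hy => by
      simpa [Real.norm_eq_abs] using hptbound x hx y hy
  refine ⟨hintOn, ?_, ?_, ?_⟩
  · intro lam hlam x hx
    set G : (Fin r → ℝ) → ℝ := fun y => g (Sum.elim y (Sum.elim y fun j => lam * x j)) with hG
    set F : (Fin r → ℝ) → ℝ := fun y => g (Sum.elim y (Sum.elim y x)) with hF
    have hSmem : ∀ y : Fin r → ℝ, (lam • y ∈ S ↔ y ∈ S) := by
      intro y
      constructor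
      · intro h i
        have := h i
        simp only [Pi.smul_apply, smul_eq_mul] at this
        nlinarith
      · intro h i
        have := h i
        simp only [Pi.smul_apply, smul_eq_mul]
        positivity
    have hkey : ∀ y ∈ S, G (lam • y) = lam ^ α * F y := by
      intro y hy
      have hz : ∀ i, 0 < Sum.elim y (Sum.elim y x) i := by rintro (j|j|j) <;> simp only [Sum.elim_inl, Sum.elim_inr] <;> [exact hy j; exact hy j; exact hx j]
      have := hhom lam hlam _ hz
      rw [hG, hF]
      simp only
      rw [← this]
      congr 1
      funext i
      rcases i with j | j | j <;> simp
    have hind : ∀ y : Fin r → ℝ,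
        S.indicator G (lam • y) = S.indicator (fun y => lam ^ α * F y) y := by
      intro y
      by_cases hy : y ∈ S
      · rw [Set.indicator_of_mem ((hSmem y).2 hy), Set.indicator_of_mem hy, hkey y hy]
      · rw [Set.indicator_of_notMem (fun h => hy ((hSmem y).1 h)), Set.indicator_of_notMem hy]
    have hcs := Measure.integral_comp_smul (μ := volume) (S.indicator G) lam
    rw [hfinrank] at hcs
    have hlr : (0:ℝ) < lam ^ r := pow_pos hlam r
    have hout : ∫ y, S.indicator G (lam • y) = lam ^ α * ∫ y in S, F y := by
      rw [show (fun y => S.indicator G (lam • y)) = fun y => S.indicator (fun y => lam ^ α * F y) y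
        from funext hind] at hcs ⊢
      rw [integral_indicator hS, integral_const_mul]
    rw [hout] at hcs
    have hG' : ∫ y in S, G y = ∫ y, S.indicator G y := (integral_indicator hS).symm
    rw [smul_eq_mul, abs_of_pos (by positivity : (0:ℝ) < (lam ^ r)⁻¹)] at hcs
    have hJ : ∫ y, S.indicator G y = lam ^ r * (lam ^ α * ∫ y in S, F y) := by
      rw [hcs]; field_simp
    rw [hG', hJ, Real.rpow_add hlam, Real.rpow_natCast]
    ring
  · linarith
  · linarith
end

section
/- Let γ_1,…,γ_k be real numbers with -1 < γ_j < -1/2 for all j and ∑_{j=1}^k γ_j < -k/2 - 1/2, and let σ be any permutation of {1,…,k}. Then ∑_{n=1}^∞ ∑_{i ∈ ℤ_+^k} ∏_{j=1}^k (i_j+n)^{γ_j} i_j^{γ_{σ(j)}} < ∞. -/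
lemma sumPNat (a : ℝ) (ha : a < -1) : Summable (fun n : ℕ+ => ((n : ℕ) : ℝ) ^ a) := by
  have h := (Real.summable_nat_rpow (p := a)).mpr ha
  exact h.comp_injective (fun m n h => PNat.coe_injective h)

lemma sumPi (k : ℕ) (h : Fin k → ℕ+ → ℝ) (h0 : ∀ j x, 0 ≤ h j x)
    (hs : ∀ j, Summable (h j)) :
    Summable (fun i : Fin k → ℕ+ => ∏ j, h j (i j)) := by
  induction k with
  | zero => simpa using Summable.of_finite
  | succ k ih =>
    have key := Summable.mul_of_nonneg (hs 0)
      (ih (fun j => h j.succ) (fun j x => h0 j.succ x) (fun j => hs j.succ))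
      (fun x => h0 0 x)
      (fun i => Finset.prod_nonneg fun j _ => h0 j.succ (i j))
    refine ((Fin.consEquiv (fun _ => ℕ+)).summable_iff).mp ?_
    refine key.congr fun p => ?_
    simp [Fin.consEquiv, Fin.prod_univ_succ]

lemma amgm (x y θ : ℝ) (hx : 1 ≤ x) (hy : 1 ≤ y) (hθ0 : 0 ≤ θ) (hθ1 : θ ≤ 1) :
    x ^ θ * y ^ (1 - θ) ≤ x + y := by
  set m := max x y with hm
  have hxm : x ≤ m := le_max_left _ _
  have hym : y ≤ m := le_max_right _ _
  have hm1 : (1:ℝ) ≤ m := le_trans hx hxm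
  calc x ^ θ * y ^ (1 - θ) ≤ m ^ θ * m ^ (1 - θ) := by
        apply mul_le_mul (Real.rpow_le_rpow (by linarith) hxm hθ0)
          (Real.rpow_le_rpow (by linarith) hym (by linarith))
          (Real.rpow_nonneg (by linarith) _) (Real.rpow_nonneg (by linarith) _)
    _ = m := by rw [← Real.rpow_add (by linarith), add_sub_cancel, Real.rpow_one]
    _ ≤ x + y := by rcases max_cases x y with ⟨h1,_⟩|⟨h1,_⟩ <;> rw [hm, h1] <;> linarith

/-- If `-1 < γ_j < -1/2` for all `j`, `∑ γ_j < -k/2 - 1/2`, and `σ` is a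
permutation of `{1, …, k}`, then
`∑_{n≥1} ∑_{i ∈ ℤ₊^k} ∏_j (i_j + n)^{γ_j} i_j^{γ_{σ(j)}} < ∞`. -/
theorem stmt_12 (k : ℕ) (hk : 1 ≤ k) (γ : Fin k → ℝ)
    (hγ₁ : ∀ j, -1 < γ j) (hγ₂ : ∀ j, γ j < -1/2)
    (hsum : ∑ j, γ j < -(k : ℝ)/2 - 1/2)
    (σ : Equiv.Perm (Fin k)) :
    Summable (fun p : ℕ+ × (Fin k → ℕ+) =>
      ∏ j, (((p.2 j : ℕ) : ℝ) + ((p.1 : ℕ) : ℝ)) ^ (γ j) *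
        ((p.2 j : ℕ) : ℝ) ^ (γ (σ j))) := by
  have hne : Nonempty (Fin k) := Fin.pos_iff_nonempty.mp hk
  set S := ∑ j, γ j with hSdef
  have hk1 : (1:ℝ) ≤ k := by exact_mod_cast hk
  have hS1 : S < -1 := by
    have : -(k:ℝ)/2 - 1/2 ≤ -1 := by linarith
    linarith
  have h2S : 2 * S + k < -1 := by linarith
  have hγneg : ∀ j, 0 < -γ j := fun j => by linarith [hγ₂ j]
  set t : Fin k → ℝ := fun j => (1 + γ (σ j)) / (-γ j) with htdef
  have ht0 : ∀ j, 0 < t j := fun j => div_pos (by linarith [hγ₁ (σ j)]) (hγneg j)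
  have ht1 : ∀ j, t j < 1 := fun j => (div_lt_one (hγneg j)).mpr (by
    have := hγ₂ (σ j); have := hγ₂ j; linarith)
  set δ : ℝ := Finset.univ.inf' Finset.univ_nonempty (fun j => 1 - t j) with hδdef
  have hδ0 : 0 < δ := by
    rw [hδdef, Finset.lt_inf'_iff]
    exact fun j _ => by linarith [ht1 j]
  set ε : ℝ := min δ ((-1 - (2 * S + k)) / (2 * (-S))) with hεdef
  have hε0 : 0 < ε := lt_min hδ0 (div_pos (by linarith) (by linarith))
  have hεδ : ε ≤ δ := min_le_left _ _
  have hεS : ε * (-S) ≤ (-1 - (2 * S + k)) / 2 := by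
    have h := min_le_right δ ((-1 - (2 * S + k)) / (2 * (-S)))
    have hS0 : 0 < -S := by linarith
    calc ε * (-S) ≤ ((-1 - (2 * S + k)) / (2 * (-S))) * (-S) := by
          apply mul_le_mul_of_nonneg_right (le_trans (le_of_eq rfl) h) hS0.le
      _ = (-1 - (2 * S + k)) / 2 := by
          have hS0' : S ≠ 0 := by intro h; rw [h] at hS0; simp at hS0
          field_simp
  set θ : Fin k → ℝ := fun j => t j + ε with hθdef
  have hθ0 : ∀ j, 0 ≤ θ j := fun j => by have := ht0 j; simp [hθdef]; linarith
  have hθ1 : ∀ j, θ j ≤ 1 := by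
    intro j
    have : δ ≤ 1 - t j := Finset.inf'_le _ (Finset.mem_univ j)
    simp only [hθdef]; linarith
  have htγ : ∀ j, t j * γ j = -(1 + γ (σ j)) := by
    intro j
    have hne0 : γ j ≠ 0 := by have := hγ₂ j; intro h; rw [h] at this; linarith
    rw [htdef]
    field_simp [hne0]
  set a : Fin k → ℝ := fun j => θ j * γ j + γ (σ j) with hadef
  have ha : ∀ j, a j < -1 := by
    intro j
    have : a j = -1 + ε * γ j := by
      simp only [hadef, hθdef, add_mul, htγ j]; ring
    rw [this]
    nlinarith [hγ₂ j, hε0]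
  set c : ℝ := ∑ j, (1 - θ j) * γ j with hcdef
  have hc : c < -1 := by
    have hcval : c = 2 * S + k - ε * S := by
      rw [hcdef]
      have : ∀ j ∈ Finset.univ, (1 - θ j) * γ j = γ j + 1 + γ (σ j) - ε * γ j := by
        intro j _
        simp only [hθdef, sub_mul, add_mul, htγ j]; ring
      rw [Finset.sum_congr rfl this]
      have hperm : ∑ j, γ (σ j) = S := Fintype.sum_equiv σ _ _ (fun j => rfl)
      simp only [Finset.sum_sub_distrib, Finset.sum_add_distrib, ← Finset.mul_sum]
      rw [hperm]
      simp [← hSdef]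
      ring
    have : ε * (-S) ≤ (-1 - (2 * S + k)) / 2 := hεS
    rw [hcval]; linarith
  -- comparison function
  have hsumF : Summable (fun p : ℕ+ × (Fin k → ℕ+) =>
      ((p.1 : ℕ) : ℝ) ^ c * ∏ j, ((p.2 j : ℕ) : ℝ) ^ (a j)) := by
    apply Summable.mul_of_nonneg (sumPNat c hc)
      (sumPi k (fun j x => ((x : ℕ) : ℝ) ^ (a j))
        (fun j x => Real.rpow_nonneg (by positivity) _)
        (fun j => sumPNat (a j) (ha j)))
      (fun n => Real.rpow_nonneg (by positivity) _)
      (fun i => Finset.prod_nonneg fun j _ => Real.rpow_nonneg (by positivity) _)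
  apply Summable.of_nonneg_of_le _ _ hsumF
  · intro p
    exact Finset.prod_nonneg fun j _ => mul_nonneg
      (Real.rpow_nonneg (by positivity) _) (Real.rpow_nonneg (by positivity) _)
  · intro p
    obtain ⟨n, i⟩ := p
    have hn1 : (1:ℝ) ≤ ((n:ℕ):ℝ) := by exact_mod_cast n.one_le
    have hi1 : ∀ j, (1:ℝ) ≤ ((i j : ℕ):ℝ) := fun j => by exact_mod_cast (i j).one_le
    calc ∏ j, (((i j : ℕ) : ℝ) + ((n : ℕ) : ℝ)) ^ (γ j) * ((i j : ℕ) : ℝ) ^ (γ (σ j))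
        ≤ ∏ j, (((n:ℕ):ℝ) ^ ((1 - θ j) * γ j) * ((i j : ℕ):ℝ) ^ (a j)) := by
          apply Finset.prod_le_prod
          · intro j _
            exact mul_nonneg (Real.rpow_nonneg (by positivity) _)
              (Real.rpow_nonneg (by positivity) _)
          · intro j _
            set x : ℝ := ((i j : ℕ) : ℝ)
            set y : ℝ := ((n : ℕ) : ℝ)
            have hx1 : (1:ℝ) ≤ x := hi1 j
            have hkey : x ^ (θ j) * y ^ (1 - θ j) ≤ x + y :=
              amgm x y (θ j) hx1 hn1 (hθ0 j) (hθ1 j)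
            have hbase : 0 < x ^ (θ j) * y ^ (1 - θ j) := by
              apply mul_pos (Real.rpow_pos_of_pos (by linarith) _)
                (Real.rpow_pos_of_pos (by linarith) _)
            have h1 : (x + y) ^ (γ j) ≤ (x ^ (θ j) * y ^ (1 - θ j)) ^ (γ j) :=
              Real.rpow_le_rpow_of_nonpos hbase hkey (by linarith [hγ₂ j])
            have h2 : (x ^ (θ j) * y ^ (1 - θ j)) ^ (γ j)
                = x ^ (θ j * γ j) * y ^ ((1 - θ j) * γ j) := by
              rw [Real.mul_rpow (Real.rpow_nonneg (by linarith) _)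
                (Real.rpow_nonneg (by linarith) _),
                ← Real.rpow_mul (by linarith), ← Real.rpow_mul (by linarith)]
            calc (x + y) ^ (γ j) * x ^ (γ (σ j))
                ≤ (x ^ (θ j * γ j) * y ^ ((1 - θ j) * γ j)) * x ^ (γ (σ j)) := by
                  rw [← h2]
                  exact mul_le_mul_of_nonneg_right h1 (Real.rpow_nonneg (by linarith) _)
              _ = y ^ ((1 - θ j) * γ j) * x ^ (a j) := by
                  rw [hadef, Real.rpow_add (by linarith : (0:ℝ) < x)]
                  ring
      _ = ((n:ℕ):ℝ) ^ c * ∏ j, ((i j : ℕ):ℝ) ^ (a j) := by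
          rw [Finset.prod_mul_distrib, hcdef, ← Real.rpow_sum_of_pos (by linarith) _ _]
end

section
/- Let γ < -1/2. Then r(n) := ∑_{i=1}^∞ (i+n)^γ i^γ satisfies r(n) ∼ B(γ+1, -1-2γ) n^{2γ+1} as n → ∞, when -1 < γ < -1/2; here B is the Beta function. -/
open Filter MeasureTheory

section Stmt13Aux

open Set

variable {γ : ℝ}

private lemma stmt13_g_nonneg {c x : ℝ} (hx : 0 < x) (hc : 0 < c) :
    0 ≤ (x + c) ^ γ * x ^ γ := by positivity

private lemma stmt13_image_eq {c : ℝ} (hc : 0 < c) :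
    (fun t : ℝ => c * t / (1 - t)) '' Ioo 0 1 = Ioi 0 := by
  ext y
  simp only [mem_image, mem_Ioo, mem_Ioi]
  constructor
  · rintro ⟨t, ⟨ht0, ht1⟩, rfl⟩
    have h1 : 0 < 1 - t := by linarith
    positivity
  · intro hy
    refine ⟨y / (y + c), ⟨by positivity, ?_⟩, ?_⟩
    · rw [div_lt_one (by positivity)]; linarith
    · have h : (0:ℝ) < y + c := by positivity
      field_simp
      rw [add_sub_cancel_left, div_self hc.ne']

private lemma stmt13_key_identity {c : ℝ} (hc : 0 < c) :
    ∫ x in Ioi (0:ℝ), (x + c) ^ γ * x ^ γ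
      = c ^ (2*γ+1) * ∫ t in Ioo (0:ℝ) 1, t ^ γ * (1 - t) ^ (-2*γ-2) := by
  have hs : MeasurableSet (Ioo (0:ℝ) 1) := measurableSet_Ioo
  have hderiv : ∀ t ∈ Ioo (0:ℝ) 1,
      HasDerivWithinAt (fun t : ℝ => c * t / (1 - t)) (c / (1 - t)^2) (Ioo 0 1) t := by
    intro t ht
    have h1 : 1 - t ≠ 0 := by rw [mem_Ioo] at ht; intro h; linarith [ht.2]
    have h := (((hasDerivAt_id t).const_mul c).div ((hasDerivAt_id t).const_sub 1) h1)
    simp only [id_eq] at h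
    have heq : (c * 1 * (1 - t) - c * t * (-1)) / (1 - t)^2 = c / (1 - t)^2 := by ring_nf
    rw [heq] at h
    exact h.hasDerivWithinAt
  have hinj : InjOn (fun t : ℝ => c * t / (1 - t)) (Ioo 0 1) := by
    intro a ha b hb h
    rw [mem_Ioo] at ha hb
    have h1 : 1 - a ≠ 0 := by intro h'; linarith [ha.2]
    have h2 : 1 - b ≠ 0 := by intro h'; linarith [hb.2]
    field_simp at h
    nlinarith [hc]
  have := integral_image_eq_integral_abs_deriv_smul hs hderiv hinj
    (fun x => (x + c) ^ γ * x ^ γ)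
  rw [stmt13_image_eq hc] at this
  rw [this]
  rw [← integral_const_mul]
  refine setIntegral_congr_fun hs (fun t ht => ?_)
  rw [mem_Ioo] at ht
  obtain ⟨ht0, ht1⟩ := ht
  have hst : 0 < 1 - t := by linarith
  have habs : |c / (1 - t)^2| = c / (1-t)^2 := abs_of_pos (by positivity)
  rw [smul_eq_mul, habs]
  have harg : c * t / (1 - t) + c = c / (1 - t) := by field_simp; ring
  rw [harg]
  have e1 : (c / (1-t)) ^ γ = c ^ γ / (1-t) ^ γ := Real.div_rpow hc.le hst.le γ
  have e2 : (c * t / (1-t)) ^ γ = c ^ γ * t ^ γ / (1-t) ^ γ := by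
    rw [Real.div_rpow (by positivity) hst.le, Real.mul_rpow hc.le ht0.le]
  have e3 : c ^ (2*γ+1) = c ^ γ * c ^ γ * c := by
    rw [show 2*γ+1 = γ+γ+1 by ring, Real.rpow_add hc, Real.rpow_add hc, Real.rpow_one]
  have e4 : (1-t) ^ (-2*γ-2) = ((1-t) ^ γ * (1-t) ^ γ * (1-t)^2)⁻¹ := by
    have h2 : (1-t:ℝ) ^ ((2:ℕ):ℝ) = (1-t)^(2:ℕ) := Real.rpow_natCast _ 2
    rw [show (-2*γ-2 : ℝ) = -(γ+(γ+((2:ℕ):ℝ))) by push_cast; ring, Real.rpow_neg hst.le,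
      Real.rpow_add hst, Real.rpow_add hst, h2]
    ring
  rw [e1, e2, e3, e4]
  have hcγ : (0:ℝ) < c ^ γ := Real.rpow_pos_of_pos hc γ
  have hsγ : (0:ℝ) < (1-t) ^ γ := Real.rpow_pos_of_pos hst γ
  field_simp

private lemma stmt13_integrableOn_g_Ioc (hγ₁ : -1 < γ) (hγ₂ : γ < -1/2) {c : ℝ} (hc : 0 < c) :
    IntegrableOn (fun x : ℝ => (x + c) ^ γ * x ^ γ) (Ioc 0 1) := by
  have hmeas : Measurable fun x : ℝ => (x + c) ^ γ * x ^ γ := by fun_prop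
  have hbd : IntegrableOn (fun x : ℝ => c ^ γ * x ^ γ) (Ioc 0 1) :=
    (((intervalIntegral.intervalIntegrable_rpow' hγ₁ (a := 0) (b := 1)).1).const_mul (c ^ γ))
  refine hbd.mono' hmeas.aestronglyMeasurable ?_
  rw [ae_restrict_iff' measurableSet_Ioc]
  filter_upwards with x hx
  rw [mem_Ioc] at hx
  have hγneg : γ ≤ 0 := by linarith
  have h1 : (x + c) ^ γ ≤ c ^ γ := Real.rpow_le_rpow_of_nonpos hc (by linarith [hx.1]) hγneg
  have h2 : (0:ℝ) ≤ x ^ γ := Real.rpow_nonneg hx.1.le γ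
  rw [Real.norm_eq_abs, abs_of_nonneg (stmt13_g_nonneg hx.1 hc)]
  exact mul_le_mul_of_nonneg_right h1 h2

private lemma stmt13_integrableOn_g_Ioi1 (hγ₂ : γ < -1/2) {c : ℝ} (hc : 0 < c) :
    IntegrableOn (fun x : ℝ => (x + c) ^ γ * x ^ γ) (Ioi 1) := by
  have hmeas : Measurable fun x : ℝ => (x + c) ^ γ * x ^ γ := by fun_prop
  have hbd : IntegrableOn (fun x : ℝ => x ^ (2*γ)) (Ioi (1:ℝ)) :=
    integrableOn_Ioi_rpow_of_lt (by linarith) one_pos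
  refine hbd.mono' hmeas.aestronglyMeasurable ?_
  rw [ae_restrict_iff' measurableSet_Ioi]
  filter_upwards with x hx
  rw [mem_Ioi] at hx
  have hx0 : (0:ℝ) < x := lt_trans one_pos hx
  have hγneg : γ ≤ 0 := by linarith
  have h1 : (x + c) ^ γ ≤ x ^ γ := Real.rpow_le_rpow_of_nonpos hx0 (by linarith) hγneg
  have h2 : (0:ℝ) ≤ x ^ γ := Real.rpow_nonneg hx0.le γ
  rw [Real.norm_eq_abs, abs_of_nonneg (stmt13_g_nonneg hx0 hc)]
  calc (x + c) ^ γ * x ^ γ ≤ x ^ γ * x ^ γ := mul_le_mul_of_nonneg_right h1 h2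
    _ = x ^ (2*γ) := by rw [← Real.rpow_add hx0]; ring_nf

private lemma stmt13_integrableOn_g (hγ₁ : -1 < γ) (hγ₂ : γ < -1/2) {c : ℝ} (hc : 0 < c) :
    IntegrableOn (fun x : ℝ => (x + c) ^ γ * x ^ γ) (Ioi 0) := by
  rw [← Ioc_union_Ioi_eq_Ioi (zero_le_one (α := ℝ))]
  exact (stmt13_integrableOn_g_Ioc hγ₁ hγ₂ hc).union (stmt13_integrableOn_g_Ioi1 hγ₂ hc)

private lemma stmt13_integral_g_pos (hγ₁ : -1 < γ) (hγ₂ : γ < -1/2) {c : ℝ} (hc : 0 < c) :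
    0 < ∫ x in Ioi (0:ℝ), (x + c) ^ γ * x ^ γ := by
  have hint := stmt13_integrableOn_g hγ₁ hγ₂ hc
  have hnn : 0 ≤ᶠ[ae (volume.restrict (Ioi (0:ℝ)))] fun x : ℝ => (x + c) ^ γ * x ^ γ := by
    filter_upwards [self_mem_ae_restrict measurableSet_Ioi] with x hx
    exact stmt13_g_nonneg hx hc
  rw [setIntegral_pos_iff_support_of_nonneg_ae hnn hint]
  have hsub : Ioi (0:ℝ) ⊆ Function.support (fun x : ℝ => (x + c) ^ γ * x ^ γ) ∩ Ioi 0 := by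
    intro x hx
    rw [mem_Ioi] at hx
    exact ⟨ne_of_gt (by positivity), hx⟩
  refine lt_of_lt_of_le ?_ (measure_mono hsub)
  simp [Real.volume_Ioi]

private lemma stmt13_antitoneOn_g (hγ : γ ≤ 0) {c : ℝ} (hc : 0 < c) {s : Set ℝ}
    (hs : s ⊆ Ioi 0) :
    AntitoneOn (fun x : ℝ => (x + c) ^ γ * x ^ γ) s := by
  intro a ha b hb hab
  have ha0 : (0:ℝ) < a := hs ha
  have hb0 : (0:ℝ) < b := hs hb
  exact mul_le_mul (Real.rpow_le_rpow_of_nonpos (by linarith) (by linarith) hγ)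
    (Real.rpow_le_rpow_of_nonpos ha0 hab hγ) (Real.rpow_nonneg hb0.le γ)
    (Real.rpow_nonneg (by positivity) γ)

private lemma stmt13_summable_g (hγ₂ : γ < -1/2) {c : ℝ} (hc : 0 < c) :
    Summable (fun k : ℕ => ((k:ℝ) + 1 + c) ^ γ * ((k:ℝ) + 1) ^ γ) := by
  have h : Summable ((fun n : ℕ => (n:ℝ) ^ (2*γ)) ∘ (fun k : ℕ => k + 1)) :=
    (Real.summable_nat_rpow.2 (by linarith)).comp_injective (add_left_injective 1)
  refine Summable.of_nonneg_of_le (fun k => by positivity) (fun k => ?_) h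
  simp only [Function.comp_apply]
  push_cast
  have hx : (0:ℝ) < (k:ℝ) + 1 := by positivity
  have hγneg : γ ≤ 0 := by linarith
  calc ((k:ℝ) + 1 + c) ^ γ * ((k:ℝ) + 1) ^ γ
      ≤ ((k:ℝ) + 1) ^ γ * ((k:ℝ) + 1) ^ γ :=
        mul_le_mul_of_nonneg_right
          (Real.rpow_le_rpow_of_nonpos hx (by linarith) hγneg) (Real.rpow_nonneg hx.le γ)
    _ = ((k:ℝ) + 1) ^ (2*γ) := by rw [← Real.rpow_add hx]; ring_nf

private lemma stmt13_integral_Ioc_le (hγ₁ : -1 < γ) (hγ₂ : γ < -1/2) {c : ℝ} (hc : 0 < c) :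
    ∫ x in Ioc (0:ℝ) 1, (x + c) ^ γ * x ^ γ ≤ c ^ γ * (1/(γ+1)) := by
  have hint := stmt13_integrableOn_g_Ioc hγ₁ hγ₂ hc
  have hbd : IntegrableOn (fun x : ℝ => c ^ γ * x ^ γ) (Ioc 0 1) :=
    ((intervalIntegral.intervalIntegrable_rpow' hγ₁ (a := 0) (b := 1)).1).const_mul (c ^ γ)
  have h1 : ∫ x in Ioc (0:ℝ) 1, (x + c) ^ γ * x ^ γ ≤ ∫ x in Ioc (0:ℝ) 1, c ^ γ * x ^ γ := by
    refine setIntegral_mono_on hint hbd measurableSet_Ioc (fun x hx => ?_)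
    rw [mem_Ioc] at hx
    exact mul_le_mul_of_nonneg_right
      (Real.rpow_le_rpow_of_nonpos hc (by linarith [hx.1]) (by linarith))
      (Real.rpow_nonneg hx.1.le γ)
  have h2 : ∫ x in Ioc (0:ℝ) 1, c ^ γ * x ^ γ = c ^ γ * (1/(γ+1)) := by
    rw [integral_const_mul]
    congr 1
    rw [← intervalIntegral.integral_of_le zero_le_one]
    rw [integral_rpow (Or.inl hγ₁)]
    rw [Real.one_rpow, Real.zero_rpow (by linarith : γ + 1 ≠ 0)]
    ring
  linarith

private lemma stmt13_nonneg_ae {c : ℝ} (hc : 0 < c) :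
    0 ≤ᶠ[ae (volume.restrict (Ioi (0:ℝ)))] fun x : ℝ => (x + c) ^ γ * x ^ γ := by
  filter_upwards [self_mem_ae_restrict measurableSet_Ioi] with x hx
  exact stmt13_g_nonneg hx hc

private lemma stmt13_interval_le_I (hγ₁ : -1 < γ) (hγ₂ : γ < -1/2) {c : ℝ} (hc : 0 < c)
    (N : ℕ) :
    ∫ x in (1:ℝ)..(1 + (N:ℕ)), (x + c) ^ γ * x ^ γ
      ≤ ∫ x in Ioi (0:ℝ), (x + c) ^ γ * x ^ γ := by
  rw [intervalIntegral.integral_of_le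
    (le_add_of_nonneg_right (Nat.cast_nonneg N) : (1:ℝ) ≤ 1 + (N:ℕ))]
  refine setIntegral_mono_set (stmt13_integrableOn_g hγ₁ hγ₂ hc) (stmt13_nonneg_ae hc) ?_
  refine HasSubset.Subset.eventuallyLE ?_
  intro x hx
  rw [mem_Ioc] at hx
  exact lt_trans one_pos hx.1

private lemma stmt13_tsum_upper (hγ₁ : -1 < γ) (hγ₂ : γ < -1/2) {c : ℝ} (hc : 0 < c) :
    ∑' k : ℕ, ((k:ℝ) + 1 + c) ^ γ * ((k:ℝ) + 1) ^ γ
      ≤ (1 + c) ^ γ + ∫ x in Ioi (0:ℝ), (x + c) ^ γ * x ^ γ := by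
  have hsum := stmt13_summable_g hγ₂ hc
  rw [Summable.tsum_eq_zero_add hsum]
  have h0 : ((0:ℕ):ℝ) + 1 + c = 1 + c := by norm_num
  refine add_le_add (le_of_eq (by rw [h0]; norm_num [Real.one_rpow])) ?_
  refine Summable.tsum_le_of_sum_range_le (hsum.comp_injective (add_left_injective 1)) (fun N => ?_)
  have hanti : AntitoneOn (fun x : ℝ => (x + c) ^ γ * x ^ γ) (Icc 1 (1 + (N:ℕ))) := by
    refine stmt13_antitoneOn_g (by linarith) hc (fun x hx => ?_)
    rw [mem_Icc] at hx
    exact lt_of_lt_of_le one_pos hx.1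
  have key := hanti.sum_le_integral
  refine le_trans (le_of_eq ?_) (le_trans key (stmt13_interval_le_I hγ₁ hγ₂ hc N))
  refine Finset.sum_congr rfl (fun i _ => ?_)
  push_cast
  ring_nf

private lemma stmt13_tsum_lower (hγ₁ : -1 < γ) (hγ₂ : γ < -1/2) {c : ℝ} (hc : 0 < c) :
    ∫ x in Ioi (1:ℝ), (x + c) ^ γ * x ^ γ
      ≤ ∑' k : ℕ, ((k:ℝ) + 1 + c) ^ γ * ((k:ℝ) + 1) ^ γ := by
  have hsum := stmt13_summable_g hγ₂ hc
  have htend : Tendsto (fun N : ℕ => ∫ x in (1:ℝ)..(1 + (N:ℕ)), (x + c) ^ γ * x ^ γ)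
      atTop (nhds (∫ x in Ioi (1:ℝ), (x + c) ^ γ * x ^ γ)) := by
    have hI1 : IntegrableOn (fun x : ℝ => (x + c) ^ γ * x ^ γ) (Ioi 1) :=
      (stmt13_integrableOn_g hγ₁ hγ₂ hc).mono_set (fun x (hx : (1:ℝ) < x) => show (0:ℝ) < x from lt_trans one_pos hx)
    have h := MeasureTheory.intervalIntegral_tendsto_integral_Ioi 1 hI1 tendsto_id
    exact h.comp (tendsto_atTop_add_const_left atTop 1 tendsto_natCast_atTop_atTop)
  refine le_of_tendsto' htend (fun N => ?_)
  have hanti : AntitoneOn (fun x : ℝ => (x + c) ^ γ * x ^ γ) (Icc 1 (1 + (N:ℕ))) := by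
    refine stmt13_antitoneOn_g (by linarith) hc (fun x hx => ?_)
    rw [mem_Icc] at hx
    exact lt_of_lt_of_le one_pos hx.1
  have hcongr : ∑ i ∈ Finset.range N, ((1:ℝ) + i + c) ^ γ * ((1:ℝ) + i) ^ γ
      = ∑ k ∈ Finset.range N, ((k:ℝ) + 1 + c) ^ γ * ((k:ℝ) + 1) ^ γ := by
    refine Finset.sum_congr rfl (fun i _ => ?_)
    ring_nf
  refine le_trans hanti.integral_le_sum (le_trans (le_of_eq hcongr)
    (hsum.sum_le_tsum (Finset.range N) (fun k _ => by positivity)))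

private lemma stmt13_split_I (hγ₁ : -1 < γ) (hγ₂ : γ < -1/2) {c : ℝ} (hc : 0 < c) :
    ∫ x in Ioi (0:ℝ), (x + c) ^ γ * x ^ γ
      = (∫ x in Ioc (0:ℝ) 1, (x + c) ^ γ * x ^ γ)
        + ∫ x in Ioi (1:ℝ), (x + c) ^ γ * x ^ γ := by
  rw [← Ioc_union_Ioi_eq_Ioi (zero_le_one (α := ℝ))]
  refine setIntegral_union ?_ measurableSet_Ioi
    ((stmt13_integrableOn_g hγ₁ hγ₂ hc).mono_set (fun x hx => hx.1))
    ((stmt13_integrableOn_g hγ₁ hγ₂ hc).mono_set (fun x (hx : (1:ℝ) < x) => show (0:ℝ) < x from lt_trans one_pos hx))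
  exact Ioc_disjoint_Ioi le_rfl

private lemma stmt13_lower_bound (hγ₁ : -1 < γ) (hγ₂ : γ < -1/2) {c : ℝ} (hc : 0 < c) :
    (∫ x in Ioi (0:ℝ), (x + c) ^ γ * x ^ γ) - c ^ γ * (1/(γ+1))
      ≤ ∑' k : ℕ, ((k:ℝ) + 1 + c) ^ γ * ((k:ℝ) + 1) ^ γ := by
  have h1 := stmt13_split_I hγ₁ hγ₂ hc
  have h2 := stmt13_integral_Ioc_le hγ₁ hγ₂ hc
  have h3 := stmt13_tsum_lower hγ₁ hγ₂ hc
  linarith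

private lemma stmt13_upper_bound (hγ₁ : -1 < γ) (hγ₂ : γ < -1/2) {c : ℝ} (hc : 0 < c) :
    ∑' k : ℕ, ((k:ℝ) + 1 + c) ^ γ * ((k:ℝ) + 1) ^ γ
      ≤ c ^ γ + ∫ x in Ioi (0:ℝ), (x + c) ^ γ * x ^ γ := by
  have h1 := stmt13_tsum_upper hγ₁ hγ₂ hc
  have h4 : (1 + c) ^ γ ≤ c ^ γ :=
    Real.rpow_le_rpow_of_nonpos hc (by linarith) (by linarith)
  linarith

end Stmt13Aux

open Set in
/-- For `-1 < γ < -1/2`, `r(n) = ∑_{i≥1} (i+n)^γ i^γ` satisfies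
`r(n) ∼ B(γ+1, -1-2γ) n^{2γ+1}` as `n → ∞`, where
`B(γ+1, -1-2γ) = ∫_0^1 t^{(γ+1)-1} (1-t)^{(-1-2γ)-1} dt`. -/
theorem stmt_13 (γ : ℝ) (hγ₁ : -1 < γ) (hγ₂ : γ < -1/2) :
    Tendsto (fun n : ℕ =>
        (∑' i : ℕ+, (((i : ℕ) : ℝ) + (n : ℝ)) ^ γ * ((i : ℕ) : ℝ) ^ γ) /
          ((∫ t in Set.Ioo (0 : ℝ) 1, t ^ ((γ + 1) - 1) * (1 - t) ^ ((-1 - 2 * γ) - 1)) *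
            (n : ℝ) ^ (2 * γ + 1)))
      atTop (nhds 1) := by
  have hexp1 : (γ + 1) - 1 = γ := by ring
  have hexp2 : (-1 - 2 * γ) - 1 = -2*γ-2 := by ring
  simp only [hexp1, hexp2]
  set B : ℝ := ∫ t in Set.Ioo (0 : ℝ) 1, t ^ γ * (1 - t) ^ (-2*γ-2) with hB
  have hBpos : 0 < B := by
    have h1 := stmt13_key_identity (γ := γ) (c := 1) one_pos
    rw [Real.one_rpow, one_mul] at h1
    rw [hB, ← h1]
    exact stmt13_integral_g_pos hγ₁ hγ₂ one_pos
  have hγ1pos : (0:ℝ) < γ + 1 := by linarith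
  have hz : Tendsto (fun n : ℕ => ((n:ℝ)) ^ (-γ-1)) atTop (nhds 0) := by
    have h := (tendsto_rpow_neg_atTop hγ1pos).comp
      (tendsto_natCast_atTop_atTop (R := ℝ))
    simpa [Function.comp_def, show -(γ+1) = -γ-1 by ring] using h
  have hLtend : Tendsto (fun n : ℕ => 1 - ((n:ℝ) ^ (-γ-1) / B) * (1/(γ+1)))
      atTop (nhds 1) := by
    have := ((hz.div_const B).mul_const (1/(γ+1))).const_sub 1
    simpa using this
  have hUtend : Tendsto (fun n : ℕ => 1 + (n:ℝ) ^ (-γ-1) / B) atTop (nhds 1) := by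
    have := (hz.div_const B).const_add 1
    simpa using this
  have main : ∀ n : ℕ, 1 ≤ n →
      (1 - ((n:ℝ) ^ (-γ-1) / B) * (1/(γ+1))
          ≤ (∑' i : ℕ+, (((i : ℕ) : ℝ) + (n : ℝ)) ^ γ * ((i : ℕ) : ℝ) ^ γ) /
              (B * (n : ℝ) ^ (2 * γ + 1)))
        ∧ ((∑' i : ℕ+, (((i : ℕ) : ℝ) + (n : ℝ)) ^ γ * ((i : ℕ) : ℝ) ^ γ) /
              (B * (n : ℝ) ^ (2 * γ + 1))
          ≤ 1 + (n:ℝ) ^ (-γ-1) / B) := by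
    intro n hn
    set c : ℝ := (n:ℝ) with hcdef
    have hc1 : (1:ℝ) ≤ c := by rw [hcdef]; exact_mod_cast hn
    have hc : (0:ℝ) < c := lt_of_lt_of_le one_pos hc1
    have hSeq : (∑' i : ℕ+, (((i : ℕ) : ℝ) + c) ^ γ * ((i : ℕ) : ℝ) ^ γ)
        = ∑' k : ℕ, ((k:ℝ) + 1 + c) ^ γ * ((k:ℝ) + 1) ^ γ := by
      rw [← Equiv.tsum_eq (Equiv.pnatEquivNat.symm)
        (fun i : ℕ+ => (((i : ℕ) : ℝ) + c) ^ γ * ((i : ℕ) : ℝ) ^ γ)]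
      refine tsum_congr (fun k => ?_)
      have hk : ((Equiv.pnatEquivNat.symm k : ℕ+) : ℕ) = k + 1 := by
        simp [Equiv.pnatEquivNat]
      simp only [hk]
      push_cast
      ring_nf
    set S : ℝ := ∑' k : ℕ, ((k:ℝ) + 1 + c) ^ γ * ((k:ℝ) + 1) ^ γ with hSdef
    rw [hSeq]
    have hIeq : (∫ x in Ioi (0:ℝ), (x + c) ^ γ * x ^ γ) = c ^ (2*γ+1) * B :=
      stmt13_key_identity hc
    have hlow := stmt13_lower_bound hγ₁ hγ₂ hc
    have hup := stmt13_upper_bound hγ₁ hγ₂ hc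
    rw [hIeq, ← hSdef] at hlow hup
    have hcp : (0:ℝ) < c ^ (2*γ+1) := Real.rpow_pos_of_pos hc _
    have hD : (0:ℝ) < B * c ^ (2*γ+1) := mul_pos hBpos hcp
    have hcg : c ^ γ = c ^ (2*γ+1) * c ^ (-γ-1) := by
      rw [← Real.rpow_add hc]; ring_nf
    constructor
    · refine le_trans (le_of_eq ?_) ((div_le_div_iff_of_pos_right hD).2 hlow)
      rw [hcg]
      field_simp
    · refine le_trans ((div_le_div_iff_of_pos_right hD).2 hup) (le_of_eq ?_)
      rw [hcg]
      field_simp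
      ring
  refine tendsto_of_tendsto_of_tendsto_of_le_of_le' hLtend hUtend ?_ ?_ <;>
    filter_upwards [eventually_ge_atTop 1] with n hn
  · exact (main n hn).1
  · exact (main n hn).2
end
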